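/- Let n ≥ 2, let A be a set of n agents, each agent a ∈ A having a fixed signal s̄_a ∈ ℝ≥0 and a valuation function v̄_a : ℝ≥0^A → ℝ≥0 that is monotone and submodular over signals; for X ⊆ A let s̄_X denote the profile equal to s̄ on X and 0 elsewhere. Let a_1, …, a_n be a uniformly random ordering of A and A_t = {a_1, …, a_t}. Fix a linear order on A for tie-breaking and let T be the least t > n/2 such that a_t maximizes v̄_a(s̄_{A_t}) over a ∈ A_t (ties broken by the fixed order), with T = ∞ if no such t exists. Then the expected myopic welfare satisfies E[1[T ≤ n] · v̄_{a_T}(s̄_{A_T})] ≥ (1/4) · max_{a∈A} v̄_a(s̄). -/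

import Mathlib

open Finset

attribute [local instance] Classical.propDecidable

namespace Stmt13

variable {n : ℕ}

def Apre (π : Equiv.Perm (Fin n)) (t : ℕ) : Finset (Fin n) :=
  (Finset.univ.filter fun i : Fin n => (i : ℕ) < t).image π

def arrp [NeZero n] (π : Equiv.Perm (Fin n)) (s : ℕ) : Fin n :=
  π ⟨(s - 1) % n, Nat.mod_lt _ (Nat.pos_of_ne_zero (NeZero.ne n))⟩

def Stp [NeZero n] (best : Finset (Fin n) → Fin n) (π : Equiv.Perm (Fin n)) (s : ℕ) : Prop :=
  arrp π s = best (Apre π s)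

def NoStp [NeZero n] (best : Finset (Fin n) → Fin n) (t0 : ℕ) (π : Equiv.Perm (Fin n))
    (u : ℕ) : Prop :=
  ∀ s, t0 ≤ s → s ≤ u → ¬ Stp best π s

def cfun (t0 u : ℕ) : ℕ := if u < t0 then u.factorial else (t0 - 1) * (u - 1).factorial

lemma Apre_card (π : Equiv.Perm (Fin n)) {s : ℕ} (h : s ≤ n) : (Apre π s).card = s := by
  rw [Apre, Finset.card_image_of_injective _ π.injective]
  have : (univ.filter fun i : Fin n => (i:ℕ) < s) = Finset.map (Fin.castLEEmb h) univ := by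
    ext i; simp [Fin.castLEEmb]
    constructor
    · intro hi; exact ⟨⟨i, hi⟩, rfl⟩
    · rintro ⟨j, rfl⟩; exact j.2
  rw [this]; simp

lemma Apre_zero (π : Equiv.Perm (Fin n)) : Apre π 0 = ∅ := by
  simp [Apre]

lemma Apre_mono (π : Equiv.Perm (Fin n)) {s t : ℕ} (h : s ≤ t) : Apre π s ⊆ Apre π t := by
  apply Finset.image_subset_image
  intro i hi
  simp only [Finset.mem_filter] at *
  exact ⟨hi.1, lt_of_lt_of_le hi.2 h⟩

lemma arrp_succ [NeZero n] (π : Equiv.Perm (Fin n)) {u : ℕ} (hu : u < n) :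
    arrp π (u + 1) = π ⟨u, hu⟩ := by
  simp [arrp, Nat.mod_eq_of_lt hu]

lemma Apre_succ [NeZero n] (π : Equiv.Perm (Fin n)) {u : ℕ} (hu : u < n) :
    Apre π (u + 1) = insert (arrp π (u + 1)) (Apre π u) := by
  rw [arrp_succ π hu]
  have : (univ.filter fun i : Fin n => (i:ℕ) < u + 1)
      = insert ⟨u, hu⟩ (univ.filter fun i : Fin n => (i:ℕ) < u) := by
    ext i
    simp only [Finset.mem_filter, Finset.mem_insert, Finset.mem_univ, true_and]
    constructor
    · intro hi
      rcases Nat.lt_succ_iff_lt_or_eq.1 hi with h | h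
      · exact Or.inr h
      · exact Or.inl (Fin.ext h)
    · rintro (rfl | h)
      · exact Nat.lt_succ_self u
      · exact Nat.lt_succ_of_lt h
  rw [Apre, this, Finset.image_insert]; rfl

lemma arrp_not_mem [NeZero n] (π : Equiv.Perm (Fin n)) {u : ℕ} (hu : u < n) :
    arrp π (u + 1) ∉ Apre π u := by
  rw [arrp_succ π hu]
  intro h
  rw [Apre, Finset.mem_image] at h
  obtain ⟨i, hi, hie⟩ := h
  simp only [Finset.mem_filter] at hi
  have := π.injective hie
  subst this
  exact absurd hi.2 (lt_irrefl _)

lemma arrp_mem [NeZero n] (π : Equiv.Perm (Fin n)) {u : ℕ} (hu : u < n) :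
    arrp π (u + 1) ∈ Apre π (u + 1) := by
  rw [Apre_succ π hu]; exact Finset.mem_insert_self _ _

lemma Apre_comp (c π : Equiv.Perm (Fin n)) (s : ℕ) :
    Apre (c * π) s = (Apre π s).image c := by
  rw [Apre, Apre, Finset.image_image]; rfl

lemma arrp_comp [NeZero n] (c π : Equiv.Perm (Fin n)) (s : ℕ) :
    arrp (c * π) s = c (arrp π s) := rfl




section
variable [NeZero n] (best : Finset (Fin n) → Fin n) (t0 : ℕ)

lemma arrp_mem_of_le [NeZero n] (π : Equiv.Perm (Fin n)) {s : ℕ} (h1 : 1 ≤ s) (h2 : s ≤ n) :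
    arrp π s ∈ Apre π s := by
  obtain ⟨u, rfl⟩ : ∃ u, s = u + 1 := ⟨s - 1, by omega⟩
  exact arrp_mem π (by omega)

lemma comp_preserve (ht0 : 1 ≤ t0) {c π : Equiv.Perm (Fin n)} {u : ℕ} (hu : u ≤ n)
    (hfix : ∀ x ∈ Apre π u, c x = x) :
    Apre (c * π) u = Apre π u ∧ (NoStp best t0 (c * π) u ↔ NoStp best t0 π u) := by
  have hA : ∀ s, s ≤ u → Apre (c * π) s = Apre π s := by
    intro s hs
    rw [Apre_comp]
    have : ∀ x ∈ Apre π s, c x = x := fun x hx => hfix x (Apre_mono π hs hx)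
    calc (Apre π s).image c = (Apre π s).image id := Finset.image_congr this
    _ = Apre π s := Finset.image_id
  have hS : ∀ s, 1 ≤ s → s ≤ u → (Stp best (c * π) s ↔ Stp best π s) := by
    intro s h1 h2
    unfold Stp
    rw [hA s h2, arrp_comp, hfix _ (Apre_mono π h2 (arrp_mem_of_le π h1 (le_trans h2 hu)))]
  refine ⟨hA u le_rfl, ?_⟩
  constructor
  · intro h s hs1 hs2 hstp
    exact h s hs1 hs2 ((hS s (le_trans ht0 hs1) hs2).2 hstp)
  · intro h s hs1 hs2 hstp
    exact h s hs1 hs2 ((hS s (le_trans ht0 hs1) hs2).1 hstp)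

noncomputable def Dset (u : ℕ) (Z : Finset (Fin n)) : Finset (Equiv.Perm (Fin n)) :=
  univ.filter fun π => Apre π u = Z ∧ NoStp best t0 π u

noncomputable def Gset (u : ℕ) (W : Finset (Fin n)) (y : Fin n) :
    Finset (Equiv.Perm (Fin n)) :=
  univ.filter fun π => Apre π u = W ∧ NoStp best t0 π u ∧ arrp π (u + 1) = y

lemma Gswap_mem (ht0 : 1 ≤ t0) {u : ℕ} (hu : u < n) {W : Finset (Fin n)} {y y' : Fin n}
    (hy : y ∉ W) (hy' : y' ∉ W) {π : Equiv.Perm (Fin n)} (hπ : π ∈ Gset best t0 u W y) :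
    (Equiv.swap y y') * π ∈ Gset best t0 u W y' := by
  rw [Gset, Finset.mem_filter] at hπ ⊢
  obtain ⟨-, hA, hN, harr⟩ := hπ
  have hfix : ∀ x ∈ Apre π u, (Equiv.swap y y') x = x := by
    intro x hx
    rw [hA] at hx
    exact Equiv.swap_apply_of_ne_of_ne (fun h => hy (h ▸ hx)) (fun h => hy' (h ▸ hx))
  obtain ⟨h1, h2⟩ := comp_preserve best t0 ht0 (le_of_lt hu) hfix
  refine ⟨Finset.mem_univ _, by rw [h1, hA], h2.2 hN, ?_⟩
  rw [arrp_comp, harr, Equiv.swap_apply_left]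

lemma Gswap_card (ht0 : 1 ≤ t0) {u : ℕ} (hu : u < n) {W : Finset (Fin n)} {y y' : Fin n}
    (hy : y ∉ W) (hy' : y' ∉ W) :
    (Gset best t0 u W y).card = (Gset best t0 u W y').card := by
  apply Finset.card_bij' (fun π _ => (Equiv.swap y y') * π) (fun π _ => (Equiv.swap y y') * π)
  · intro π hπ; exact Gswap_mem best t0 ht0 hu hy hy' hπ
  · intro π hπ
    have := Gswap_mem best t0 ht0 hu hy' hy hπ
    rwa [Equiv.swap_comm] at this
  · intro π _; rw [← mul_assoc, Equiv.swap_mul_self, one_mul]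
  · intro π _; rw [← mul_assoc, Equiv.swap_mul_self, one_mul]

lemma D_to_G (ht0 : 1 ≤ t0) {u : ℕ} (hu : u < n) {W : Finset (Fin n)} (hWu : W.card = u)
    {y : Fin n} (hy : y ∉ W) :
    (Dset best t0 u W).card = (n - u) * (Gset best t0 u W y).card := by
  have hmaps : ∀ π ∈ Dset best t0 u W, arrp π (u + 1) ∈ univ \ W := by
    intro π hπ
    rw [Dset, Finset.mem_filter] at hπ
    rw [Finset.mem_sdiff]
    exact ⟨Finset.mem_univ _, fun h => arrp_not_mem π hu (hπ.2.1 ▸ h)⟩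
  rw [Finset.card_eq_sum_card_fiberwise hmaps]
  have hfib : ∀ y' ∈ univ \ W,
      ((Dset best t0 u W).filter fun π => arrp π (u+1) = y') = Gset best t0 u W y' := by
    intro y' _
    ext π
    simp only [Dset, Gset, Finset.mem_filter, Finset.mem_univ, true_and]
    tauto
  calc ∑ y' ∈ univ \ W, ((Dset best t0 u W).filter fun π => arrp π (u+1) = y').card
      = ∑ y' ∈ univ \ W, (Gset best t0 u W y).card := by
        apply Finset.sum_congr rfl
        intro y' hy'
        rw [hfib y' hy']
        exact Gswap_card best t0 ht0 hu (by rw [Finset.mem_sdiff] at hy'; exact hy'.2) hy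
    _ = (n - u) * (Gset best t0 u W y).card := by
        rw [Finset.sum_const, smul_eq_mul]
        congr 1
        rw [Finset.card_sdiff_of_subset (Finset.subset_univ W), hWu, Finset.card_univ, Fintype.card_fin]

lemma cfun_succ (ht0 : 1 ≤ t0) (u : ℕ) :
    (if u + 1 < t0 then (u+1) else u) * cfun t0 u = cfun t0 (u + 1) := by
  unfold cfun
  rcases lt_trichotomy (u+1) t0 with h | h | h
  · rw [if_pos h, if_pos (by omega), if_pos h, Nat.factorial_succ]
  · rw [if_neg (by omega), if_pos (by omega), if_neg (by omega)]
    have : t0 - 1 = u := by omega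
    rw [this]
    simp [Nat.add_sub_cancel]
  · rw [if_neg (by omega), if_neg (by omega), if_neg (by omega)]
    have h1 : 1 ≤ u := by omega
    have : u + 1 - 1 = u := by omega
    rw [this, mul_comm u _, mul_assoc]
    congr 1
    rw [mul_comm]
    exact Nat.mul_factorial_pred (by omega)

lemma G_of_D (ht0 : 1 ≤ t0) {u : ℕ} (hu : u < n) {W : Finset (Fin n)} (hWu : W.card = u)
    {y : Fin n} (hy : y ∉ W)
    (hD : (Dset best t0 u W).card = cfun t0 u * (n - u).factorial) :
    (Gset best t0 u W y).card = cfun t0 u * (n - u - 1).factorial := by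
  have hpos : 0 < n - u := by omega
  apply Nat.eq_of_mul_eq_mul_left hpos
  rw [← D_to_G best t0 ht0 hu hWu hy, hD, ← Nat.mul_factorial_pred hpos.ne']
  ring

lemma countD (hbest : ∀ Z : Finset (Fin n), Z.Nonempty → best Z ∈ Z) (ht0 : 1 ≤ t0) :
    ∀ u, u ≤ n → ∀ Z : Finset (Fin n), Z.card = u →
      (Dset best t0 u Z).card = cfun t0 u * (n - u).factorial := by
  intro u
  induction u with
  | zero =>
    intro _ Z hZ
    rw [Finset.card_eq_zero] at hZ
    subst hZ
    have : Dset best t0 0 (∅ : Finset (Fin n)) = univ := by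
      rw [Dset, Finset.filter_true_of_mem]
      intro π _
      exact ⟨Apre_zero π, fun s hs1 hs2 _ => by omega⟩
    rw [this, Finset.card_univ, Fintype.card_perm, Fintype.card_fin, cfun, if_pos (by omega)]
    simp
  | succ u ih =>
    intro hun Z hZ
    have hu : u < n := by omega
    have hZne : Z.Nonempty := Finset.card_pos.1 (by omega)
    set allowed : Finset (Fin n) := if u + 1 < t0 then Z else Z.erase (best Z) with hallowed
    have hallsub : allowed ⊆ Z := by
      rw [hallowed]; split
      · exact subset_rfl
      · exact Finset.erase_subset _ _
    have hmaps : ∀ π ∈ Dset best t0 (u+1) Z, arrp π (u+1) ∈ allowed := by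
      intro π hπ
      rw [Dset, Finset.mem_filter] at hπ
      obtain ⟨-, hA, hN⟩ := hπ
      have hmem : arrp π (u+1) ∈ Z := hA ▸ arrp_mem π hu
      rw [hallowed]
      split
      · exact hmem
      · rename_i hts
        refine Finset.mem_erase.2 ⟨?_, hmem⟩
        intro heq
        exact hN (u+1) (by omega) le_rfl (by rw [Stp, hA, heq])
    have hfib : ∀ y ∈ allowed,
        ((Dset best t0 (u+1) Z).filter fun π => arrp π (u+1) = y)
          = Gset best t0 u (Z.erase y) y := by
      intro y hy
      have hyZ : y ∈ Z := hallsub hy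
      ext π
      rw [Finset.mem_filter, Dset, Gset, Finset.mem_filter, Finset.mem_filter]
      constructor
      · rintro ⟨⟨-, hA, hN⟩, harr⟩
        refine ⟨Finset.mem_univ _, ?_, fun s h1 h2 => hN s h1 (by omega), harr⟩
        rw [← harr, ← hA, Apre_succ π hu, Finset.erase_insert (arrp_not_mem π hu)]
      · rintro ⟨-, hA, hN, harr⟩
        have hAsucc : Apre π (u+1) = Z := by
          rw [Apre_succ π hu, harr, hA, Finset.insert_erase hyZ]
        refine ⟨⟨Finset.mem_univ _, hAsucc, ?_⟩, harr⟩
        intro s h1 h2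
        rcases Nat.lt_or_ge s (u+1) with h | h
        · exact hN s h1 (by omega)
        · have hseq : s = u + 1 := by omega
          subst hseq
          intro hstp
          rw [Stp, hAsucc, harr] at hstp
          have : ¬ (u + 1 < t0) := by omega
          rw [hallowed, if_neg this] at hy
          exact (Finset.mem_erase.1 hy).1 hstp
    rw [Finset.card_eq_sum_card_fiberwise hmaps]
    have hterm : ∀ y ∈ allowed,
        ((Dset best t0 (u+1) Z).filter fun π => arrp π (u+1) = y).card
          = cfun t0 u * (n - (u+1)).factorial := by
      intro y hy
      rw [hfib y hy]
      have hyZ : y ∈ Z := hallsub hy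
      have hWcard : (Z.erase y).card = u := by
        rw [Finset.card_erase_of_mem hyZ, hZ]
        omega
      have hD := ih (by omega) (Z.erase y) hWcard
      have hG := G_of_D best t0 ht0 hu hWcard (Finset.notMem_erase y Z) hD
      rw [hG]
      have hnn : n - u - 1 = n - (u + 1) := by omega
      rw [hnn]
    rw [Finset.sum_congr rfl hterm, Finset.sum_const, smul_eq_mul]
    have hcard : allowed.card = if u + 1 < t0 then (u+1) else u := by
      rw [hallowed]
      split
      · exact hZ
      · rw [Finset.card_erase_of_mem (hbest Z hZne), hZ]
        omega
    rw [hcard, ← mul_assoc, cfun_succ t0 ht0 u]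

lemma countG (hbest : ∀ Z : Finset (Fin n), Z.Nonempty → best Z ∈ Z) (ht0 : 1 ≤ t0)
    {u : ℕ} (hu : u < n) {W : Finset (Fin n)} (hWu : W.card = u) {y : Fin n} (hy : y ∉ W) :
    (Gset best t0 u W y).card = cfun t0 u * (n - u - 1).factorial := by
  exact G_of_D best t0 ht0 hu hWu hy (countD best t0 hbest ht0 u (by omega) W hWu)

lemma countC (hbest : ∀ Z : Finset (Fin n), Z.Nonempty → best Z ∈ Z) (ht0 : 2 ≤ t0)
    {t : ℕ} (ht : t0 ≤ t) (htn : t ≤ n) {X : Finset (Fin n)} (hX : X.card = t) :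
    (univ.filter fun π : Equiv.Perm (Fin n) =>
        Apre π t = X ∧ NoStp best t0 π (t - 1) ∧ Stp best π t).card
      = (t0 - 1) * (t - 2).factorial * (n - t).factorial := by
  have ht1 : t - 1 < n := by omega
  have hXne : X.Nonempty := Finset.card_pos.1 (by omega)
  have hbX : best X ∈ X := hbest X hXne
  have htt : t - 1 + 1 = t := by omega
  have hset : (univ.filter fun π : Equiv.Perm (Fin n) =>
      Apre π t = X ∧ NoStp best t0 π (t - 1) ∧ Stp best π t)
      = Gset best t0 (t-1) (X.erase (best X)) (best X) := by
    ext π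
    rw [Finset.mem_filter, Gset, Finset.mem_filter]
    constructor
    · rintro ⟨-, hA, hN, hstp⟩
      rw [Stp, hA] at hstp
      refine ⟨Finset.mem_univ _, ?_, hN, by rw [htt]; exact hstp⟩
      have : Apre π t = insert (arrp π t) (Apre π (t-1)) := by
        conv_lhs => rw [← htt]
        rw [Apre_succ π ht1, htt]
      rw [← hstp, ← hA, this]
      rw [Finset.erase_insert (by rw [← htt] at this ⊢; exact arrp_not_mem π ht1)]
    · rintro ⟨-, hA, hN, harr⟩
      rw [htt] at harr
      have hAt : Apre π t = X := by
        conv_lhs => rw [← htt]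
        rw [Apre_succ π ht1, htt, harr, hA, Finset.insert_erase hbX]
      exact ⟨Finset.mem_univ _, hAt, hN, by rw [Stp, hAt, harr]⟩
  rw [hset]
  have hW : (X.erase (best X)).card = t - 1 := by rw [Finset.card_erase_of_mem hbX, hX]
  rw [countG best t0 hbest (by omega) ht1 hW (Finset.notMem_erase _ _)]
  have hc : cfun t0 (t-1) = (t0 - 1) * (t-2).factorial := by
    unfold cfun
    split
    · rename_i h
      have he : t0 - 1 = t - 1 := by omega
      have h2 : t - 2 = t - 1 - 1 := by omega
      rw [he, h2, Nat.mul_factorial_pred (show t - 1 ≠ 0 by omega)]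
    · have h2 : t - 1 - 1 = t - 2 := by omega
      rw [h2]
  rw [hc]
  have h3 : n - (t - 1) - 1 = n - t := by omega
  rw [h3]

end


lemma card_pcard_mem {α : Type*} [DecidableEq α] {O : Finset α} {x : α} (hx : x ∈ O)
    {r : ℕ} (hr : 1 ≤ r) :
    ((O.powersetCard r).filter fun R => x ∈ R).card = (O.card - 1).choose (r - 1) := by
  rw [← Finset.card_erase_of_mem hx, ← Finset.card_powersetCard]
  apply Finset.card_nbij' (fun R => R.erase x) (fun S => insert x S)
  · intro R hR
    rw [Finset.mem_coe, Finset.mem_filter, Finset.mem_powersetCard] at hR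
    obtain ⟨⟨hsub, hcard⟩, hmem⟩ := hR
    rw [Finset.mem_coe, Finset.mem_powersetCard]
    exact ⟨Finset.erase_subset_erase x hsub,
      by rw [Finset.card_erase_of_mem hmem, hcard]⟩
  · intro S hS
    rw [Finset.mem_coe, Finset.mem_powersetCard] at hS
    obtain ⟨hsub, hcard⟩ := hS
    have hxS : x ∉ S := fun h => Finset.notMem_erase x O (hsub h)
    rw [Finset.mem_coe, Finset.mem_filter, Finset.mem_powersetCard]
    refine ⟨⟨?_, ?_⟩, Finset.mem_insert_self x S⟩
    · intro a ha
      rcases Finset.mem_insert.1 ha with rfl | h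
      · exact hx
      · exact Finset.erase_subset _ _ (hsub h)
    · rw [Finset.card_insert_of_notMem hxS, hcard]
      omega
  · intro R hR
    rw [Finset.mem_coe, Finset.mem_filter] at hR
    exact Finset.insert_erase hR.2
  · intro S hS
    rw [Finset.mem_coe, Finset.mem_powersetCard] at hS
    exact Finset.erase_insert (fun h => Finset.notMem_erase x O (hS.1 h))

variable {n m : ℕ} (w : Finset (Fin n) → ℝ) (astar : Fin n) (g : Fin m → Fin n)

def Ppre (k : ℕ) : Finset (Fin n) := (Finset.univ.filter fun j : Fin m => (j : ℕ) < k).image g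

lemma Ppre_zero : Ppre g 0 = ∅ := by simp [Ppre]

lemma Ppre_succ {k : ℕ} (hk : k < m) :
    Ppre g (k + 1) = insert (g ⟨k, hk⟩) (Ppre g k) := by
  have : (univ.filter fun j : Fin m => (j:ℕ) < k + 1)
      = insert ⟨k, hk⟩ (univ.filter fun j : Fin m => (j:ℕ) < k) := by
    ext j
    simp only [Finset.mem_filter, Finset.mem_insert, Finset.mem_univ, true_and]
    constructor
    · intro hj
      rcases Nat.lt_succ_iff_lt_or_eq.1 hj with h | h
      · exact Or.inr h
      · exact Or.inl (Fin.ext h)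
    · rintro (rfl | h)
      · exact Nat.lt_succ_self k
      · exact Nat.lt_succ_of_lt h
  rw [Ppre, this, Finset.image_insert]; rfl

lemma Ppre_not_mem (hg : Function.Injective g) {k : ℕ} (hk : k < m) :
    g ⟨k, hk⟩ ∉ Ppre g k := by
  intro h
  rw [Ppre, Finset.mem_image] at h
  obtain ⟨j, hj, hje⟩ := h
  simp only [Finset.mem_filter] at hj
  have := hg hje
  subst this
  exact absurd hj.2 (lt_irrefl _)

lemma subavg_pointwise (hg : Function.Injective g) (hga : ∀ j, g j ≠ astar)
    (hsub : ∀ (X Y : Finset (Fin n)) (i : Fin n), X ⊆ Y → i ∉ Y →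
      w (insert i Y) - w Y ≤ w (insert i X) - w X) :
    ∀ k, k ≤ m → ∀ R : Finset (Fin n), R ⊆ Ppre g k →
      w {astar} + ∑ j ∈ (Finset.univ.filter fun j : Fin m => g j ∈ R),
          (w (insert astar (Ppre g ((j : ℕ) + 1))) - w (insert astar (Ppre g (j : ℕ))))
        ≤ w (insert astar R) := by
  intro k
  induction k with
  | zero =>
    intro _ R hR
    rw [Ppre_zero] at hR
    rw [Finset.subset_empty.1 hR]
    have : (Finset.univ.filter fun j : Fin m => g j ∈ (∅ : Finset (Fin n))) = ∅ := by
      simp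
    rw [this, Finset.sum_empty]
    simp
  | succ k ih =>
    intro hk R hR
    have hkm : k < m := by omega
    set x := g ⟨k, hkm⟩ with hx
    rw [Ppre_succ g hkm, ← hx] at hR
    by_cases hxR : x ∈ R
    · set R' := R.erase x with hR'
      have hR'sub : R' ⊆ Ppre g k := by
        intro a ha
        rw [hR', Finset.mem_erase] at ha
        rcases Finset.mem_insert.1 (hR ha.2) with h | h
        · exact absurd h ha.1
        · exact h
      have hxk : x ∉ Ppre g k := Ppre_not_mem g hg hkm
      have hxa : x ≠ astar := hga _
      -- marginal bound
      have hxPa : x ∉ insert astar (Ppre g k) := by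
        rw [Finset.mem_insert]; rintro (h | h); exact hxa h; exact hxk h
      have hmarg : w (insert astar (Ppre g (k+1))) - w (insert astar (Ppre g k))
          ≤ w (insert x (insert astar R')) - w (insert astar R') := by
        have h1 : insert astar (Ppre g (k+1)) = insert x (insert astar (Ppre g k)) := by
          rw [Ppre_succ g hkm, ← hx, Finset.insert_comm]
        rw [h1]
        apply hsub
        · apply Finset.insert_subset_insert
          exact hR'sub
        · exact hxPa
      have hRR' : insert astar R = insert x (insert astar R') := by
        rw [Finset.insert_comm, Finset.insert_erase hxR]
      -- split the sum
      have hsplit : (Finset.univ.filter fun j : Fin m => g j ∈ R)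
          = insert ⟨k, hkm⟩ (Finset.univ.filter fun j : Fin m => g j ∈ R') := by
        ext j
        simp only [Finset.mem_filter, Finset.mem_insert, Finset.mem_univ, true_and]
        constructor
        · intro hj
          by_cases hje : j = ⟨k, hkm⟩
          · exact Or.inl hje
          · refine Or.inr ?_
            rw [hR', Finset.mem_erase]
            exact ⟨fun h => hje (hg (h.trans hx)), hj⟩
        · rintro (rfl | hj)
          · exact hxR
          · exact (Finset.erase_subset _ _) hj
      have hnotmem : (⟨k, hkm⟩ : Fin m) ∉ (Finset.univ.filter fun j : Fin m => g j ∈ R') := by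
        simp only [Finset.mem_filter, Finset.mem_univ, true_and]
        rw [hR', Finset.mem_erase, ← hx]
        tauto
      rw [hsplit, Finset.sum_insert hnotmem, hRR']
      have := ih (by omega) R' hR'sub
      calc w {astar} + ((w (insert astar (Ppre g (k+1))) - w (insert astar (Ppre g k)))
              + ∑ j ∈ (Finset.univ.filter fun j : Fin m => g j ∈ R'),
                (w (insert astar (Ppre g ((j:ℕ)+1))) - w (insert astar (Ppre g (j:ℕ)))))
          ≤ (w (insert x (insert astar R')) - w (insert astar R'))
              + (w {astar} + ∑ j ∈ (Finset.univ.filter fun j : Fin m => g j ∈ R'),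
                (w (insert astar (Ppre g ((j:ℕ)+1))) - w (insert astar (Ppre g (j:ℕ))))) := by
            linarith [hmarg]
        _ ≤ (w (insert x (insert astar R')) - w (insert astar R')) + w (insert astar R') := by
            linarith [this]
        _ = w (insert x (insert astar R')) := by ring
    · have hRsub : R ⊆ Ppre g k := by
        intro a ha
        rcases Finset.mem_insert.1 (hR ha) with h | h
        · exact absurd (h ▸ ha) hxR
        · exact h
      have hfilter : (Finset.univ.filter fun j : Fin m => g j ∈ R)
          = (Finset.univ.filter fun j : Fin m => g j ∈ R) := rfl
      exact ih (by omega) R hRsub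


lemma subavg {r : ℕ} (hg : Function.Injective g) (hga : ∀ j, g j ≠ astar)
    (hsub : ∀ (X Y : Finset (Fin n)) (i : Fin n), X ⊆ Y → i ∉ Y →
      w (insert i Y) - w Y ≤ w (insert i X) - w X)
    (hr : 1 ≤ r) :
    (m.choose r : ℝ) * w {astar}
      + ((m - 1).choose (r - 1) : ℝ)
          * (w (insert astar (Finset.univ.image g)) - w {astar})
      ≤ ∑ R ∈ (Finset.univ.image g).powersetCard r, w (insert astar R) := by
  set O := Finset.univ.image g with hOdef
  have hO : O.card = m := by
    rw [hOdef, Finset.card_image_of_injective _ hg, Finset.card_univ, Fintype.card_fin]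
  have hPm : Ppre g m = O := by
    rw [Ppre, hOdef]
    congr 1
    apply Finset.filter_true_of_mem
    intro j _
    exact j.2
  set F : ℕ → ℝ := fun k => w (insert astar (Ppre g k)) with hF
  have key : ∀ R ∈ O.powersetCard r,
      w {astar} + ∑ j ∈ (Finset.univ.filter fun j : Fin m => g j ∈ R),
        (F ((j : ℕ) + 1) - F (j : ℕ)) ≤ w (insert astar R) := by
    intro R hR
    rw [Finset.mem_powersetCard] at hR
    exact subavg_pointwise w astar g hg hga hsub m le_rfl R (hPm ▸ hR.1)
  have hsum := Finset.sum_le_sum key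
  refine le_trans (le_of_eq ?_) hsum
  have hOmem : ∀ j : Fin m, g j ∈ O := fun j => by
    rw [hOdef]; exact Finset.mem_image_of_mem g (Finset.mem_univ j)
  have hco : ∀ j : Fin m,
      ((O.powersetCard r).filter fun R => g j ∈ R).card = (m - 1).choose (r - 1) := by
    intro j
    rw [card_pcard_mem (hOmem j) hr, hO]
  have hswap : (∑ R ∈ O.powersetCard r, ∑ j ∈ (Finset.univ.filter fun j : Fin m => g j ∈ R),
        (F ((j : ℕ) + 1) - F (j : ℕ)))
      = ((m - 1).choose (r - 1) : ℝ) * (F m - F 0) := by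
    calc ∑ R ∈ O.powersetCard r, ∑ j ∈ (Finset.univ.filter fun j : Fin m => g j ∈ R),
            (F ((j : ℕ) + 1) - F (j : ℕ))
        = ∑ R ∈ O.powersetCard r, ∑ j : Fin m,
            if g j ∈ R then (F ((j : ℕ) + 1) - F (j : ℕ)) else 0 := by
          refine Finset.sum_congr rfl fun R _ => ?_
          rw [Finset.sum_filter]
      _ = ∑ j : Fin m, ∑ R ∈ O.powersetCard r,
            if g j ∈ R then (F ((j : ℕ) + 1) - F (j : ℕ)) else 0 := Finset.sum_comm
      _ = ∑ j : Fin m, ((m - 1).choose (r - 1) : ℝ) * (F ((j : ℕ) + 1) - F (j : ℕ)) := by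
          refine Finset.sum_congr rfl fun j _ => ?_
          rw [← Finset.sum_filter, Finset.sum_const, hco j, nsmul_eq_mul]
      _ = ((m - 1).choose (r - 1) : ℝ) * ∑ j : Fin m, (F ((j : ℕ) + 1) - F (j : ℕ)) := by
          rw [Finset.mul_sum]
      _ = ((m - 1).choose (r - 1) : ℝ) * (F m - F 0) := by
          congr 1
          rw [Fin.sum_univ_eq_sum_range (fun k => F (k + 1) - F k) m]
          exact Finset.sum_range_sub F m
  have hF0 : F 0 = w {astar} := by simp [hF, Ppre_zero]
  have hFm : F m = w (insert astar O) := by show w (insert astar (Ppre g m)) = _; rw [hPm]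
  rw [Finset.sum_add_distrib, Finset.sum_const, Finset.card_powersetCard, hO, nsmul_eq_mul,
    hswap, hFm, hF0]


end Stmt13

open Stmt13


/-- secretary algorithm with submodular-over-signals valuations,
4-approximation: `n ≥ 2` agents have fixed signals `s̄` and monotone,
submodular-over-signals valuations `v̄`; they arrive in a uniformly random order `π`
(agent `arr π t = π (t-1)` arrives at time `t`, `A π t` is the set of the first `t`
arrivals, `mask X` zeroes out signals outside `X`); ties are broken by an injective rank.
The rule stopping at the least `t > n/2` at which the newly arrived agent strictly
lexicographically (value, then rank) dominates every other agent of the prefix obtains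
expected myopic welfare at least `(1/4) · max_a v̄_a(s̄)`. -/
theorem stmt_13 (n : ℕ) (hn : 2 ≤ n)
    (sbar : Fin n → NNReal) (vbar : Fin n → (Fin n → NNReal) → NNReal)
    (hvmono : ∀ a, Monotone (vbar a))
    (hvsubmod : ∀ (a : Fin n) (i : Fin n) (σ σ' : Fin n → NNReal), σ' ≤ σ →
      (vbar a σ : ℝ) - (vbar a (Function.update σ i (σ' i)) : ℝ) ≤
        (vbar a (Function.update σ' i (σ i)) : ℝ) - (vbar a σ' : ℝ))
    (rank : Fin n → ℕ) (hrank : Function.Injective rank)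
    (mask : Finset (Fin n) → Fin n → NNReal)
    (hmask : ∀ X j, mask X j = if j ∈ X then sbar j else 0)
    (A : Equiv.Perm (Fin n) → ℕ → Finset (Fin n))
    (hA : ∀ π t, A π t = (Finset.univ.filter fun i : Fin n => (i : ℕ) < t).image π)
    (arr : Equiv.Perm (Fin n) → ℕ → Fin n)
    (harr : ∀ (π : Equiv.Perm (Fin n)) (t : ℕ), 1 ≤ t → t ≤ n →
      ((π.symm (arr π t) : ℕ) = t - 1))
    (stops : Equiv.Perm (Fin n) → ℕ → Prop)
    (hstops : ∀ π t, stops π t ↔ ∀ a ∈ A π t, a ≠ arr π t →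
      (vbar a (mask (A π t)) < vbar (arr π t) (mask (A π t)) ∨
        (vbar a (mask (A π t)) = vbar (arr π t) (mask (A π t)) ∧
          rank (arr π t) < rank a)))
    (stopT : Equiv.Perm (Fin n) → ℕ)
    (hstopT : ∀ π, stopT π =
      if h : ((Finset.Icc 1 n).filter fun t : ℕ => (n : ℝ) / 2 < (t : ℝ) ∧ stops π t).Nonempty
      then ((Finset.Icc 1 n).filter fun t : ℕ => (n : ℝ) / 2 < (t : ℝ) ∧ stops π t).min' h
      else n + 1)
    (payoff : Equiv.Perm (Fin n) → ℝ)
    (hpayoff : ∀ π, payoff π = if stopT π ≤ n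
      then ((vbar (arr π (stopT π)) (mask (A π (stopT π))) : NNReal) : ℝ) else 0) :
    (1 / 4 : ℝ) * ((Finset.univ.sup fun a => vbar a sbar : NNReal) : ℝ) ≤
      (∑ π : Equiv.Perm (Fin n), payoff π) / (Nat.factorial n : ℝ) := by
  haveI : NeZero n := ⟨by omega⟩
  set t0 : ℕ := n / 2 + 1 with ht0def
  have ht02 : 2 ≤ t0 := by omega
  have ht0n : t0 ≤ n := by omega
  -- the optimal agent
  obtain ⟨astar, -, hastar⟩ :
      ∃ b ∈ Finset.univ, (Finset.univ.sup fun a => vbar a sbar) = vbar b sbar :=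
    Finset.exists_mem_eq_sup Finset.univ ⟨⟨0, by omega⟩, Finset.mem_univ _⟩ _
  set OPT : ℝ := ((Finset.univ.sup fun a => vbar a sbar : NNReal) : ℝ) with hOPTdef
  have hOPT0 : 0 ≤ OPT := NNReal.coe_nonneg _
  -- value function over sets
  set w : Finset (Fin n) → ℝ := fun X => ((vbar astar (mask X) : NNReal) : ℝ) with hwdef
  have hw0 : ∀ X, 0 ≤ w X := fun X => NNReal.coe_nonneg _
  have hmaskmono : ∀ {X Y : Finset (Fin n)}, X ⊆ Y → mask X ≤ mask Y := by
    intro X Y hXY j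
    rw [hmask, hmask]
    by_cases hj : j ∈ X
    · rw [if_pos hj, if_pos (hXY hj)]
    · rw [if_neg hj]
      positivity
  have hwuniv : w Finset.univ = OPT := by
    have hmu : mask Finset.univ = sbar := by
      funext j
      rw [hmask, if_pos (Finset.mem_univ j)]
    rw [hwdef]
    simp only [hmu]
    rw [hOPTdef, hastar]
  -- submodularity of w over sets
  have hwsub : ∀ (X Y : Finset (Fin n)) (i : Fin n), X ⊆ Y → i ∉ Y →
      w (insert i Y) - w Y ≤ w (insert i X) - w X := by
    intro X Y i hXY hiY
    have hiX : i ∉ X := fun h => hiY (hXY h)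
    have h1 : Function.update (mask (insert i Y)) i (mask X i) = mask Y := by
      funext j
      by_cases hj : j = i
      · rw [hj, Function.update_self, hmask, if_neg hiX, hmask, if_neg hiY]
      · rw [Function.update_of_ne hj, hmask, hmask]
        have hiff : j ∈ insert i Y ↔ j ∈ Y := by
          rw [Finset.mem_insert]; tauto
        by_cases hjY : j ∈ Y
        · rw [if_pos (hiff.2 hjY), if_pos hjY]
        · rw [if_neg (fun h => hjY (hiff.1 h)), if_neg hjY]
    have h2 : Function.update (mask X) i (mask (insert i Y) i) = mask (insert i X) := by
      funext j
      by_cases hj : j = i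
      · rw [hj, Function.update_self, hmask, if_pos (Finset.mem_insert_self i Y), hmask,
          if_pos (Finset.mem_insert_self i X)]
      · rw [Function.update_of_ne hj, hmask, hmask]
        have hiff : j ∈ insert i X ↔ j ∈ X := by
          rw [Finset.mem_insert]; tauto
        by_cases hjX : j ∈ X
        · rw [if_pos hjX, if_pos (hiff.2 hjX)]
        · rw [if_neg hjX, if_neg (fun h => hjX (hiff.1 h))]
    have hle : mask X ≤ mask (insert i Y) :=
      hmaskmono (fun a ha => Finset.mem_insert_of_mem (hXY ha))
    have hkey := hvsubmod astar i (mask (insert i Y)) (mask X) hle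
    rw [h1, h2] at hkey
    exact hkey
  -- lexicographically best agent
  have hexists : ∀ Z : Finset (Fin n), Z.Nonempty → ∃ b, b ∈ Z ∧ ∀ a ∈ Z, a ≠ b →
      (vbar a (mask Z) < vbar b (mask Z) ∨
        (vbar a (mask Z) = vbar b (mask Z) ∧ rank b < rank a)) := by
    intro Z hZ
    obtain ⟨c, hcZ, hc⟩ := Finset.exists_mem_eq_sup' hZ (fun a => vbar a (mask Z))
    set T := Z.filter (fun a => vbar a (mask Z) = Z.sup' hZ (fun a => vbar a (mask Z))) with hT
    have hTne : T.Nonempty := ⟨c, by rw [hT, Finset.mem_filter]; exact ⟨hcZ, hc.symm⟩⟩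
    obtain ⟨b, hbT, hbmin⟩ := Finset.exists_min_image T rank hTne
    rw [hT, Finset.mem_filter] at hbT
    refine ⟨b, hbT.1, ?_⟩
    intro a haZ hab
    have hle : vbar a (mask Z) ≤ vbar b (mask Z) := by
      rw [hbT.2]
      exact Finset.le_sup' (fun a => vbar a (mask Z)) haZ
    rcases lt_or_eq_of_le hle with h | h
    · exact Or.inl h
    · refine Or.inr ⟨h, ?_⟩
      have haT : a ∈ T := by
        rw [hT, Finset.mem_filter]
        exact ⟨haZ, by rw [h]; exact hbT.2⟩
      rcases lt_or_eq_of_le (hbmin a haT) with h2 | h2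
      · exact h2
      · exact absurd (hrank h2) (Ne.symm hab)
  have hzero : (0 : ℕ) < n := by omega
  set best : Finset (Fin n) → Fin n := fun Z =>
    if h : Z.Nonempty then (hexists Z h).choose else ⟨0, hzero⟩ with hbestdef
  have hbest_spec : ∀ Z : Finset (Fin n), Z.Nonempty → best Z ∈ Z ∧ ∀ a ∈ Z, a ≠ best Z →
      (vbar a (mask Z) < vbar (best Z) (mask Z) ∨
        (vbar a (mask Z) = vbar (best Z) (mask Z) ∧ rank (best Z) < rank a)) := by
    intro Z h
    rw [hbestdef]
    simp only [dif_pos h]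
    exact (hexists Z h).choose_spec
  have hbestmem : ∀ Z : Finset (Fin n), Z.Nonempty → best Z ∈ Z :=
    fun Z h => (hbest_spec Z h).1
  have huniq : ∀ Z : Finset (Fin n), ∀ b b' : Fin n,
      (b ∈ Z ∧ ∀ a ∈ Z, a ≠ b → (vbar a (mask Z) < vbar b (mask Z) ∨
        (vbar a (mask Z) = vbar b (mask Z) ∧ rank b < rank a))) →
      (b' ∈ Z ∧ ∀ a ∈ Z, a ≠ b' → (vbar a (mask Z) < vbar b' (mask Z) ∨
        (vbar a (mask Z) = vbar b' (mask Z) ∧ rank b' < rank a))) → b = b' := by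
    intro Z b b' hb hb'
    by_contra hne
    have h1 := hb'.2 b hb.1 hne
    have h2 := hb.2 b' hb'.1 (Ne.symm hne)
    rcases h1 with h1 | ⟨h1e, h1r⟩ <;> rcases h2 with h2 | ⟨h2e, h2r⟩
    · exact absurd h1 (not_lt_of_gt h2)
    · rw [h2e] at h1; exact absurd h1 (lt_irrefl _)
    · rw [h1e] at h2; exact absurd h2 (lt_irrefl _)
    · omega
  -- identifications with the abstract machinery
  have hApre : ∀ π t, A π t = Apre π t := fun π t => by rw [hA]; rfl
  have harr' : ∀ (π : Equiv.Perm (Fin n)) (s : ℕ), 1 ≤ s → s ≤ n → arr π s = arrp π s := by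
    intro π s h1 h2
    have h3 := harr π s h1 h2
    have h4 : π.symm (arrp π s)
        = ⟨(s - 1) % n, Nat.mod_lt _ (Nat.pos_of_ne_zero (NeZero.ne n))⟩ :=
      Equiv.symm_apply_apply π _
    apply π.symm.injective
    apply Fin.ext
    rw [h3, h4]
    simp [Nat.mod_eq_of_lt (show s - 1 < n by omega)]
  have hstopiff : ∀ (π : Equiv.Perm (Fin n)) (s : ℕ), 1 ≤ s → s ≤ n →
      (stops π s ↔ Stp best π s) := by
    intro π s h1 h2
    have hAs : A π s = Apre π s := hApre π s
    have hane : (Apre π s).Nonempty := Finset.card_pos.1 (by rw [Apre_card π h2]; omega)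
    have hmem : arrp π s ∈ Apre π s := arrp_mem_of_le π h1 h2
    have hbspec := hbest_spec (Apre π s) hane
    have harr2 : arr π s = arrp π s := harr' π s h1 h2
    constructor
    · intro hs
      rw [hstops, hAs, harr2] at hs
      exact huniq (Apre π s) (arrp π s) (best (Apre π s)) ⟨hmem, hs⟩ ⟨hbspec.1, hbspec.2⟩
    · intro hs
      rw [hstops, hAs, harr2]
      rw [Stp] at hs
      rw [hs]
      exact hbspec.2
  -- characterization of the stopping time
  have halfiff : ∀ s : ℕ, ((n : ℝ) / 2 < (s : ℝ)) ↔ t0 ≤ s := by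
    intro s
    rw [div_lt_iff₀ (by norm_num : (0:ℝ) < 2)]
    constructor
    · intro h
      have : (n : ℕ) < s * 2 := by exact_mod_cast h
      omega
    · intro h
      have : (n : ℕ) < s * 2 := by omega
      exact_mod_cast this
  have hmemS : ∀ (π : Equiv.Perm (Fin n)) (s : ℕ),
      (s ∈ (Finset.Icc 1 n).filter fun t : ℕ => (n : ℝ) / 2 < (t : ℝ) ∧ stops π t)
        ↔ (t0 ≤ s ∧ s ≤ n ∧ stops π s) := by
    intro π s
    rw [Finset.mem_filter, Finset.mem_Icc, halfiff]
    constructor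
    · rintro ⟨⟨-, h2⟩, h3, h4⟩; exact ⟨h3, h2, h4⟩
    · rintro ⟨h1, h2, h3⟩; exact ⟨⟨by omega, h2⟩, h1, h3⟩
  have hchar : ∀ (π : Equiv.Perm (Fin n)) (t : ℕ), t0 ≤ t → t ≤ n →
      (stopT π = t ↔ (NoStp best t0 π (t - 1) ∧ Stp best π t)) := by
    intro π t h1 h2
    constructor
    · intro hT
      rw [hstopT] at hT
      by_cases hne : ((Finset.Icc 1 n).filter fun t : ℕ =>
          (n : ℝ) / 2 < (t : ℝ) ∧ stops π t).Nonempty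
      · rw [dif_pos hne] at hT
        have hmin := Finset.min'_mem _ hne
        rw [hT] at hmin
        rw [hmemS] at hmin
        constructor
        · intro s hs1 hs2 hstp
          have hsn : s ≤ n := by omega
          have hs1' : 1 ≤ s := by omega
          have hstops : stops π s := (hstopiff π s hs1' hsn).2 hstp
          have hsS : s ∈ (Finset.Icc 1 n).filter fun t : ℕ =>
              (n : ℝ) / 2 < (t : ℝ) ∧ stops π t := (hmemS π s).2 ⟨hs1, hsn, hstops⟩
          have := Finset.min'_le _ s hsS
          omega
        · exact (hstopiff π t (by omega) h2).1 hmin.2.2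
      · rw [dif_neg hne] at hT
        omega
    · rintro ⟨hN, hS⟩
      have hstops : stops π t := (hstopiff π t (by omega) h2).2 hS
      have htS : t ∈ (Finset.Icc 1 n).filter fun t : ℕ =>
          (n : ℝ) / 2 < (t : ℝ) ∧ stops π t := (hmemS π t).2 ⟨h1, h2, hstops⟩
      have hne : ((Finset.Icc 1 n).filter fun t : ℕ =>
          (n : ℝ) / 2 < (t : ℝ) ∧ stops π t).Nonempty := ⟨t, htS⟩
      rw [hstopT, dif_pos hne]
      apply le_antisymm (Finset.min'_le _ t htS)
      set s := ((Finset.Icc 1 n).filter fun t : ℕ =>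
          (n : ℝ) / 2 < (t : ℝ) ∧ stops π t).min' hne with hs
      have hsS := Finset.min'_mem _ hne
      rw [← hs, hmemS] at hsS
      by_contra hlt
      push_neg at hlt
      have : ¬ stops π s := by
        intro hc
        exact hN s hsS.1 (by omega) ((hstopiff π s (by omega) hsS.2.1).1 hc)
      exact this hsS.2.2
  -- payoff lower bound at the stopping time
  have hpay0 : ∀ π, 0 ≤ payoff π := by
    intro π
    rw [hpayoff]
    split
    · exact NNReal.coe_nonneg _
    · exact le_refl 0
  have hpaylb : ∀ (π : Equiv.Perm (Fin n)) (t : ℕ), t0 ≤ t → t ≤ n → stopT π = t →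
      (if astar ∈ Apre π t then w (Apre π t) else 0) ≤ payoff π := by
    intro π t h1 h2 hT
    have hSt : stops π t :=
      (hstopiff π t (by omega) h2).2 ((hchar π t h1 h2).1 hT).2
    have hpv : payoff π = ((vbar (arr π t) (mask (A π t)) : NNReal) : ℝ) := by
      rw [hpayoff π, hT, if_pos h2]
    by_cases hmemA : astar ∈ Apre π t
    · rw [if_pos hmemA, hpv, ← hApre π t]
      show ((vbar astar (mask (A π t)) : NNReal) : ℝ)
        ≤ ((vbar (arr π t) (mask (A π t)) : NNReal) : ℝ)
      by_cases heq : astar = arr π t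
      · rw [heq]
      · have hs := (hstops π t).1 hSt astar (by rw [hApre π t]; exact hmemA) heq
        rcases hs with hs | ⟨hs, -⟩
        · exact_mod_cast hs.le
        · exact_mod_cast hs.le
    · rw [if_neg hmemA, hpv]
      exact NNReal.coe_nonneg _
  -- enumeration of the agents other than astar
  have hOcard : ((Finset.univ : Finset (Fin n)).erase astar).card = n - 1 := by
    rw [Finset.card_erase_of_mem (Finset.mem_univ _), Finset.card_univ, Fintype.card_fin]
  set g : Fin (n-1) → Fin n :=
    fun j => ((Finset.univ.erase astar).orderIsoOfFin hOcard j : Fin n) with hgdef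
  have hginj : Function.Injective g := by
    intro a b h
    exact (((Finset.univ.erase astar).orderIsoOfFin hOcard).injective (Subtype.ext h))
  have hgmem : ∀ j, g j ∈ Finset.univ.erase astar :=
    fun j => ((Finset.univ.erase astar).orderIsoOfFin hOcard j).2
  have hgimage : Finset.univ.image g = Finset.univ.erase astar := by
    apply Finset.eq_of_subset_of_card_le
    · intro x hx
      rw [Finset.mem_image] at hx
      obtain ⟨j, -, rfl⟩ := hx
      exact hgmem j
    · rw [hOcard, Finset.card_image_of_injective _ hginj, Finset.card_univ, Fintype.card_fin]
  have hga : ∀ j, g j ≠ astar := fun j => Finset.ne_of_mem_erase (hgmem j)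
  have hinsertO : insert astar (Finset.univ.image g) = Finset.univ := by
    rw [hgimage, Finset.insert_erase (Finset.mem_univ _)]
  -- the indicator-weighted set function
  set fF : Finset (Fin n) → ℝ := fun X => if astar ∈ X then w X else 0 with hfFdef
  -- per-time bound
  have step3 : ∀ t ∈ Finset.Icc t0 n,
      (((t0 - 1) * (n-2).factorial : ℕ) : ℝ) * OPT
        ≤ ∑ π : Equiv.Perm (Fin n), (if stopT π = t then fF (Apre π t) else 0) := by
    intro t ht
    rw [Finset.mem_Icc] at ht
    have ht2 : 2 ≤ t := by omega
    -- the count of permutations stopping at t with a given prefix set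
    have hmapsto : ∀ π ∈ (Finset.univ.filter fun π : Equiv.Perm (Fin n) => stopT π = t),
        Apre π t ∈ Finset.powersetCard t (Finset.univ : Finset (Fin n)) := by
      intro π _
      rw [Finset.mem_powersetCard]
      exact ⟨Finset.subset_univ _, Apre_card π ht.2⟩
    have hfilteq : ∀ X ∈ Finset.powersetCard t (Finset.univ : Finset (Fin n)),
        ((Finset.univ.filter fun π : Equiv.Perm (Fin n) => stopT π = t).filter
            fun π => Apre π t = X)
          = Finset.univ.filter fun π : Equiv.Perm (Fin n) =>
              Apre π t = X ∧ NoStp best t0 π (t-1) ∧ Stp best π t := by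
      intro X hX
      rw [Finset.filter_filter]
      apply Finset.filter_congr
      intro π _
      constructor
      · rintro ⟨h1, h2⟩
        have h3 := (hchar π t ht.1 ht.2).1 h1
        exact ⟨h2, h3.1, h3.2⟩
      · rintro ⟨h1, h2, h3⟩
        exact ⟨(hchar π t ht.1 ht.2).2 ⟨h2, h3⟩, h1⟩
    have e1 : ∑ π : Equiv.Perm (Fin n), (if stopT π = t then fF (Apre π t) else 0)
        = (((t0-1) * (t-2).factorial * (n-t).factorial : ℕ) : ℝ)
            * ∑ X ∈ Finset.powersetCard t (Finset.univ : Finset (Fin n)), fF X := by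
      rw [← Finset.sum_filter]
      rw [← Finset.sum_fiberwise_of_maps_to hmapsto (fun π => fF (Apre π t))]
      rw [Finset.mul_sum]
      apply Finset.sum_congr rfl
      intro X hX
      have hcongr : ∀ π ∈ (Finset.univ.filter
          fun π : Equiv.Perm (Fin n) => stopT π = t).filter (fun π => Apre π t = X),
          fF (Apre π t) = fF X := by
        intro π hπ
        rw [(Finset.mem_filter.1 hπ).2]
      rw [Finset.sum_congr rfl hcongr, Finset.sum_const, hfilteq X hX]
      rw [Finset.mem_powersetCard] at hX
      rw [countC best t0 hbestmem ht02 ht.1 ht.2 hX.2, nsmul_eq_mul]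
    -- the sum of fF over t-subsets
    have e2 : ∑ X ∈ Finset.powersetCard t (Finset.univ : Finset (Fin n)), fF X
        = ∑ R ∈ Finset.powersetCard (t-1) (Finset.univ.image g), w (insert astar R) := by
      rw [hgimage]
      have : ∑ X ∈ Finset.powersetCard t (Finset.univ : Finset (Fin n)), fF X
          = ∑ X ∈ (Finset.powersetCard t (Finset.univ : Finset (Fin n))).filter
              (fun X => astar ∈ X), w X := by
        rw [Finset.sum_filter]
      rw [this]
      apply Finset.sum_nbij' (fun X => X.erase astar) (fun R => insert astar R)
      · intro X hX
        rw [Finset.mem_filter, Finset.mem_powersetCard] at hX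
        rw [Finset.mem_powersetCard]
        refine ⟨Finset.erase_subset_erase _ (Finset.subset_univ X), ?_⟩
        rw [Finset.card_erase_of_mem hX.2, hX.1.2]
      · intro R hR
        rw [Finset.mem_powersetCard] at hR
        have hamem : astar ∉ R := fun h => Finset.notMem_erase astar _ (hR.1 h)
        rw [Finset.mem_filter, Finset.mem_powersetCard]
        refine ⟨⟨Finset.subset_univ _, ?_⟩, Finset.mem_insert_self _ _⟩
        rw [Finset.card_insert_of_notMem hamem, hR.2]
        omega
      · intro X hX
        rw [Finset.mem_filter] at hX
        exact Finset.insert_erase hX.2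
      · intro R hR
        rw [Finset.mem_powersetCard] at hR
        exact Finset.erase_insert (fun h => Finset.notMem_erase astar _ (hR.1 h))
      · intro X hX
        rw [Finset.mem_filter] at hX
        rw [Finset.insert_erase hX.2]
    -- submodular averaging bound
    have e3 : (((n-2).choose (t-2) : ℕ) : ℝ) * OPT
        ≤ ∑ R ∈ Finset.powersetCard (t-1) (Finset.univ.image g), w (insert astar R) := by
      have hs := subavg w astar g hginj hga hwsub (show 1 ≤ t - 1 by omega)
      rw [hinsertO, hwuniv] at hs
      have hidx1 : n - 1 - 1 = n - 2 := by omega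
      have hidx2 : t - 1 - 1 = t - 2 := by omega
      rw [hidx1, hidx2] at hs
      refine le_trans ?_ hs
      have hch : (n-2).choose (t-2) ≤ (n-1).choose (t-1) := by
        have h1 : n - 1 = (n-2) + 1 := by omega
        have h2 : t - 1 = (t-2) + 1 := by omega
        rw [h1, h2, Nat.choose_succ_succ]
        exact Nat.le_add_right _ _
      have hwa := hw0 {astar}
      have hchR : (((n-2).choose (t-2) : ℕ) : ℝ) ≤ (((n-1).choose (t-1) : ℕ) : ℝ) := by
        exact_mod_cast hch
      nlinarith [hw0 {astar}]
    -- combine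
    rw [e1, e2]
    have hfac : (((t0-1) * (t-2).factorial * (n-t).factorial : ℕ) : ℝ)
        * ((((n-2).choose (t-2) : ℕ) : ℝ) * OPT)
        = (((t0 - 1) * (n-2).factorial : ℕ) : ℝ) * OPT := by
      have hnat : (t0-1) * (t-2).factorial * (n-t).factorial * ((n-2).choose (t-2))
          = (t0 - 1) * (n-2).factorial := by
        have h3 : t - 2 ≤ n - 2 := by omega
        have h4 := Nat.choose_mul_factorial_mul_factorial h3
        have h5 : n - 2 - (t-2) = n - t := by omega
        rw [h5] at h4
        calc (t0-1) * (t-2).factorial * (n-t).factorial * ((n-2).choose (t-2))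
            = (t0-1) * ((n-2).choose (t-2) * (t-2).factorial * (n-t).factorial) := by ring
          _ = (t0-1) * (n-2).factorial := by rw [h4]
      push_cast [← hnat]
      ring
    rw [← hfac]
    have hcpos : (0:ℝ) ≤ (((t0-1) * (t-2).factorial * (n-t).factorial : ℕ) : ℝ) :=
      Nat.cast_nonneg _
    exact mul_le_mul_of_nonneg_left e3 hcpos
  -- summing over t
  have step1 : ∑ t ∈ Finset.Icc t0 n, ∑ π : Equiv.Perm (Fin n),
      (if stopT π = t then fF (Apre π t) else 0) ≤ ∑ π : Equiv.Perm (Fin n), payoff π := by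
    rw [Finset.sum_comm]
    apply Finset.sum_le_sum
    intro π _
    rw [Finset.sum_ite_eq (Finset.Icc t0 n) (stopT π) (fun t => fF (Apre π t))]
    split
    · rename_i hmem
      rw [Finset.mem_Icc] at hmem
      exact hpaylb π (stopT π) hmem.1 hmem.2 rfl
    · exact hpay0 π
  have htotal : ((Finset.Icc t0 n).card : ℝ) * ((((t0 - 1) * (n-2).factorial : ℕ) : ℝ) * OPT)
      ≤ ∑ π : Equiv.Perm (Fin n), payoff π := by
    refine le_trans ?_ step1
    rw [← nsmul_eq_mul, ← Finset.sum_const]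
    exact Finset.sum_le_sum step3
  -- final arithmetic
  have hfacpos : (0:ℝ) < (n.factorial : ℝ) := by
    exact_mod_cast n.factorial_pos
  rw [le_div_iff₀ hfacpos]
  refine le_trans ?_ htotal
  rw [Nat.card_Icc]
  have hnat : n.factorial ≤ 4 * ((n + 1 - t0) * ((t0 - 1) * (n-2).factorial)) := by
    have h5 : (n-1) * (n-2).factorial = (n-1).factorial := by
      have h6 := Nat.mul_factorial_pred (show n - 1 ≠ 0 by omega)
      have h7 : n - 1 - 1 = n - 2 := by omega
      rwa [h7] at h6
    have h7 : n * (n-1).factorial = n.factorial := Nat.mul_factorial_pred (by omega)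
    have h8 : n.factorial = n * (n-1) * (n-2).factorial := by
      rw [mul_assoc, h5, h7]
    rw [h8]
    have e1 : n + 1 - t0 = n - n/2 := by omega
    have e2 : t0 - 1 = n / 2 := by omega
    rw [e1, e2]
    have key : n * (n - 1) ≤ 4 * ((n - n/2) * (n/2)) := by
      set q := n / 2 with hqdef
      have hcase : n = 2*q ∨ n = 2*q + 1 := by omega
      rcases hcase with h | h
      · rw [h]
        have e3 : 2*q - q = q := by omega
        rw [e3]
        calc 2*q*(2*q-1) ≤ 2*q*(2*q) := Nat.mul_le_mul_left _ (by omega)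
          _ = 4*(q*q) := by ring
        -- need: 4*(q*q) = 4*(q*q)  (goal form)
      · rw [h]
        have e3 : 2*q+1 - q = q+1 := by omega
        have e4 : 2*q+1-1 = 2*q := by omega
        rw [e3, e4]
        calc (2*q+1)*(2*q) = 4*(q*q) + 2*q := by ring
          _ ≤ 4*(q*q+q) := by omega
          _ = 4*((q+1)*q) := by ring
    calc n * (n-1) * (n-2).factorial ≤ 4 * ((n - n/2) * (n/2)) * (n-2).factorial :=
          Nat.mul_le_mul_right _ key
      _ = 4 * ((n - n/2) * (n/2 * (n-2).factorial)) := by ring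
  have hcast : (n.factorial : ℝ)
      ≤ 4 * (((n + 1 - t0 : ℕ) : ℝ) * (((t0 - 1) * (n-2).factorial : ℕ) : ℝ)) := by
    have := hnat
    exact_mod_cast this
  calc (1/4 : ℝ) * OPT * (n.factorial : ℝ)
      ≤ (1/4 : ℝ) * OPT * (4 * (((n + 1 - t0 : ℕ) : ℝ)
          * (((t0 - 1) * (n-2).factorial : ℕ) : ℝ))) := by
        apply mul_le_mul_of_nonneg_left hcast
        positivity
    _ = ((n + 1 - t0 : ℕ) : ℝ) * ((((t0 - 1) * (n-2).factorial : ℕ) : ℝ) * OPT) := by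
        ring
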